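/- Let κ, κ̂ : ℝ → ℝ be continuously differentiable with κ(t) − κ̂(t) ≠ 0 for all t, set ρ(t) := 1/(κ(t) − κ̂(t)), and suppose κ(t)·κ̂'(t) = κ'(t)·κ̂(t) for all t (for example, if one of κ, κ̂ is a constant multiple of the other, or if one of them is identically zero). Let a ∈ ℝ with a ≠ 0 and let θ : ℝ → ℝ be twice continuously differentiable. If there exist continuously differentiable functions L, b₁, b₂ : ℝ → ℝ satisfying, for all t, θ'(t) = L(t)·(κ(t) − κ̂(t)), L'(t) = a·b₂(t), b₁'(t) = θ'(t)·b₂(t), and b₂'(t) = a·L(t)·κ̂(t) − θ'(t)·b₁(t), then there exist constants A, φ₀ ∈ ℝ such that θ''(t) + (ρ'(t)/ρ(t))·θ'(t) = (A/ρ(t))·sin(θ(t) − φ₀) for all t; that is, θ satisfies the equation of a pendulum whose length varies as ρ(t). -/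

import Mathlib

open Real

/-!
Since `κ·κ̂' = κ'·κ̂`, the ratio `κ̂ / (κ − κ̂)` has zero derivative, so `κ̂ = c·(κ − κ̂)` for a
constant `c`. The system then says that the vector `(b₁ − a c, b₂)` is rotated by the angle `θ`,
so `a b₂ = a (C₁ cos θ + C₂ sin θ) = A sin (θ − φ₀)` for constants `C₁, C₂, A, φ₀`. Finally, with
`θ' = L/ρ`, the damping term `(ρ'/ρ)·θ'` cancels the contribution of `ρ'` to `θ''`, leaving
`θ'' + (ρ'/ρ)·θ' = L'/ρ = a b₂/ρ`.
-/

theorem exists_eq_const_mul_of_mul_deriv_eq {f g : ℝ → ℝ} (hf : Differentiable ℝ f)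
    (hg : Differentiable ℝ g) (hf0 : ∀ t, f t ≠ 0)
    (hfg : ∀ t, f t * deriv g t = deriv f t * g t) :
    ∃ c : ℝ, ∀ t, g t = c * f t := by
  have hratio : ∀ t, HasDerivAt (fun s => g s / f s) 0 t := fun t =>
    ((hg t).hasDerivAt.div (hf t).hasDerivAt (hf0 t)).congr_deriv (by
      rw [mul_comm (deriv g t), hfg t]; ring)
  refine ⟨g 0 / f 0, fun t => ?_⟩
  have hconst : g t / f t = g 0 / f 0 :=
    is_const_of_deriv_eq_zero (fun s => (hratio s).differentiableAt)
      (fun s => (hratio s).deriv) t 0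
  rw [← hconst, div_mul_cancel₀ _ (hf0 t)]

theorem exists_eq_mul_cos_add_mul_sin_of_deriv_rotation {θ u v : ℝ → ℝ}
    (hθ : Differentiable ℝ θ) (hu : Differentiable ℝ u) (hv : Differentiable ℝ v)
    (hu' : ∀ t, deriv u t = deriv θ t * v t) (hv' : ∀ t, deriv v t = -(deriv θ t * u t)) :
    ∃ C₁ C₂ : ℝ, ∀ t, v t = C₁ * cos (θ t) + C₂ * sin (θ t) := by
  have hθ' t := (hθ t).hasDerivAt
  have hu'' t := (hu t).hasDerivAt
  have hv'' t := (hv t).hasDerivAt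
  have hcos : ∀ t, HasDerivAt (fun s => v s * cos (θ s) + u s * sin (θ s)) 0 t := fun t =>
    (((hv'' t).mul (hθ' t).cos).add ((hu'' t).mul (hθ' t).sin)).congr_deriv (by
      rw [hu' t, hv' t]; ring)
  have hsin : ∀ t, HasDerivAt (fun s => v s * sin (θ s) - u s * cos (θ s)) 0 t := fun t =>
    (((hv'' t).mul (hθ' t).sin).sub ((hu'' t).mul (hθ' t).cos)).congr_deriv (by
      rw [hu' t, hv' t]; ring)
  refine ⟨v 0 * cos (θ 0) + u 0 * sin (θ 0), v 0 * sin (θ 0) - u 0 * cos (θ 0), fun t => ?_⟩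
  have h₁ := is_const_of_deriv_eq_zero (fun s => (hcos s).differentiableAt)
    (fun s => (hcos s).deriv) t 0
  have h₂ := is_const_of_deriv_eq_zero (fun s => (hsin s).differentiableAt)
    (fun s => (hsin s).deriv) t 0
  linear_combination cos (θ t) * h₁ + sin (θ t) * h₂ - v t * sin_sq_add_cos_sq (θ t)

theorem exists_mul_cos_add_mul_sin_eq_mul_sin_sub (p q : ℝ) :
    ∃ A φ : ℝ, ∀ x, p * cos x + q * sin x = A * sin (x - φ) := by
  set z : ℂ := ⟨q, -p⟩
  refine ⟨‖z‖, z.arg, fun x => ?_⟩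
  rw [sin_sub]
  linear_combination -(sin x * Complex.norm_mul_cos_arg z) + cos x * Complex.norm_mul_sin_arg z

theorem deriv_mul_add_deriv_inv_div_inv_mul {L h : ℝ → ℝ} {t : ℝ} (hL : DifferentiableAt ℝ L t)
    (hh : DifferentiableAt ℝ h t) (h0 : h t ≠ 0) :
    deriv (fun s => L s * h s) t + deriv (fun s => (h s)⁻¹) t / (h t)⁻¹ * (L t * h t)
      = deriv L t * h t := by
  rw [deriv_fun_mul hL hh, deriv_fun_inv'' hh h0]
  field_simp
  ring

theorem rolling_surfaces_proportional_curvature_pendulum_general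
    (κ κh θ : ℝ → ℝ)
    (hκ : ContDiff ℝ 1 κ) (hκh : ContDiff ℝ 1 κh)
    (hne : ∀ t, κ t - κh t ≠ 0)
    (ρ : ℝ → ℝ) (hρ : ρ = fun t => (κ t - κh t)⁻¹)
    (hprop : ∀ t, κ t * deriv κh t = deriv κ t * κh t)
    (a : ℝ)
    (hθ : ContDiff ℝ 2 θ)
    (L b₁ b₂ : ℝ → ℝ)
    (hL : ContDiff ℝ 1 L) (hb₁ : ContDiff ℝ 1 b₁) (hb₂ : ContDiff ℝ 1 b₂)
    (hsys : ∀ t : ℝ,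
      deriv θ t = L t * (κ t - κh t)
      ∧ deriv L t = a * b₂ t
      ∧ deriv b₁ t = deriv θ t * b₂ t
      ∧ deriv b₂ t = a * L t * κh t - deriv θ t * b₁ t) :
    ∃ A φ₀ : ℝ, ∀ t : ℝ,
      deriv (deriv θ) t + (deriv ρ t / ρ t) * deriv θ t
        = (A / ρ t) * Real.sin (θ t - φ₀) := by
  have hκ' := hκ.differentiable one_ne_zero
  have hκh' := hκh.differentiable one_ne_zero
  have hdiff : Differentiable ℝ fun t => κ t - κh t := hκ'.sub hκh'
  obtain ⟨c, hc⟩ : ∃ c : ℝ, ∀ t, κh t = c * (κ t - κh t) :=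
    exists_eq_const_mul_of_mul_deriv_eq hdiff hκh' hne fun t => by
      rw [deriv_fun_sub (hκ' t) (hκh' t)]
      linear_combination hprop t
  obtain ⟨C₁, C₂, hb₂C⟩ := exists_eq_mul_cos_add_mul_sin_of_deriv_rotation
    (u := fun t => b₁ t - a * c) (hθ.differentiable two_ne_zero)
    ((hb₁.differentiable one_ne_zero).sub_const _) (hb₂.differentiable one_ne_zero)
    (fun t => by rw [deriv_sub_const, (hsys t).2.2.1])
    (fun t => by rw [(hsys t).2.2.2, hc t, (hsys t).1]; ring)
  obtain ⟨A, φ₀, hAφ⟩ := exists_mul_cos_add_mul_sin_eq_mul_sin_sub (a * C₁) (a * C₂)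
  refine ⟨A, φ₀, fun t => ?_⟩
  have hdθ : deriv θ = fun s => L s * (κ s - κh s) := funext fun s => (hsys s).1
  rw [hdθ, hρ]
  beta_reduce
  rw [deriv_mul_add_deriv_inv_div_inv_mul (hL.differentiable one_ne_zero t) (hdiff t)
    (hne t), (hsys t).2.1, hb₂C t, div_inv_eq_mul]
  linear_combination (κ t - κh t) * hAφ (θ t)

/-- If `κ·κ̂' = κ'·κ̂` (e.g. if one Gaussian curvature is a constant multiple of
the other), then the normal geodesic equations of two surfaces rolling without
twisting or slipping reduce to the equation of a pendulum whose length varies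
as `ρ(t) = 1/(κ(t) − κ̂(t))`. -/
theorem rolling_surfaces_proportional_curvature_pendulum
    (κ κh θ : ℝ → ℝ)
    (hκ : ContDiff ℝ 1 κ) (hκh : ContDiff ℝ 1 κh)
    (hne : ∀ t, κ t - κh t ≠ 0)
    (ρ : ℝ → ℝ) (hρ : ρ = fun t => (κ t - κh t)⁻¹)
    (hprop : ∀ t, κ t * deriv κh t = deriv κ t * κh t)
    (a : ℝ) (ha : a ≠ 0)
    (hθ : ContDiff ℝ 2 θ)
    (L b₁ b₂ : ℝ → ℝ)
    (hL : ContDiff ℝ 1 L) (hb₁ : ContDiff ℝ 1 b₁) (hb₂ : ContDiff ℝ 1 b₂)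
    (hsys : ∀ t : ℝ,
      deriv θ t = L t * (κ t - κh t)
      ∧ deriv L t = a * b₂ t
      ∧ deriv b₁ t = deriv θ t * b₂ t
      ∧ deriv b₂ t = a * L t * κh t - deriv θ t * b₁ t) :
    ∃ A φ₀ : ℝ, ∀ t : ℝ,
      deriv (deriv θ) t + (deriv ρ t / ρ t) * deriv θ t
        = (A / ρ t) * Real.sin (θ t - φ₀) :=
  rolling_surfaces_proportional_curvature_pendulum_general κ κh θ hκ hκh hne ρ hρ hprop a hθ L b₁ b₂
    hL hb₁ hb₂ hsys
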